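/- arXiv:2512.21908 — 2 statements merged into one kernel-verified Lean document; each statement's English description precedes it below -/
import Mathlib

section
/- Let q = 2^m and X ∈ F_{q^3}, written X = x + yα + zα^q with x, y, z ∈ F_q, where α ∈ F_{q^3} satisfies Tr(α) = 0 and {1, α, α^q} is a basis. Then X^{q²+q+1} = x³ + x(y² + z² + yz)·Tr(α^{q+1}) + Tr((yα + zα^q)³), where Tr = Tr_{F_{q^3}/F_q}. In particular X^{q²+q+1} ∈ F_q. -/
/-!
In characteristic 2 the map `σ : X ↦ X ^ q` is a ring endomorphism fixing `F`, and `Tr α = 0`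
reads `σ (σ α) = α + σ α`. Hence for `X = x + y α + z σ α` both `σ X` and `σ (σ X)` are again
`F`-combinations of `1, α, σ α`, and `X ^ (q² + q + 1) = X · σ X · σ (σ X)` expands, modulo 2,
to the stated polynomial in `x, y, z, α, σ α`. It lies in `F` because it is the image of the norm
`N_{E/F}(X)`.
-/

section CyclicTrace

variable {R : Type*} [CommRing R]

def cyclicTrace (σ : R →+* R) (x : R) : R := x + σ x + σ (σ x)

theorem mul_map_mul_map_map_eq_of_cyclicTrace_eq_zero [CharP R 2] (σ : R →+* R) {α : R}
    (hα : cyclicTrace σ α = 0) {a b c : R} (ha : σ a = a) (hb : σ b = b) (hc : σ c = c) :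
    (a + b * α + c * σ α) * σ (a + b * α + c * σ α) * σ (σ (a + b * α + c * σ α)) =
      a ^ 3 + a * ((b ^ 2 + c ^ 2 + b * c) * cyclicTrace σ (α * σ α)) +
        cyclicTrace σ ((b * α + c * σ α) ^ 3) := by
  have hσσ : σ (σ α) = α + σ α := by
    rw [cyclicTrace] at hα
    linear_combination hα - (α + σ α) * CharTwo.two_eq_zero (R := R)
  simp only [cyclicTrace, map_add, map_mul, map_pow, ha, hb, hc, hσσ]
  ring_nf
  reduce_mod_char!

end CyclicTrace

theorem FiniteField.algebraMap_norm_eq_pow_of_card_eq_pow_three {F E : Type*} [Field F]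
    [Fintype F] [Field E] [Fintype E] [Algebra F E] {q : ℕ} (hF : Fintype.card F = q)
    (hE : Fintype.card E = q ^ 3) (X : E) :
    algebraMap F E (Algebra.norm F X) = X ^ (q ^ 2 + q + 1) := by
  have hq : 2 ≤ q := hF ▸ Fintype.one_lt_card
  rw [algebraMap_norm_eq_pow, Nat.card_eq_fintype_card, Nat.card_eq_fintype_card, hE, hF,
    ← Nat.geomSum_eq hq]
  simp only [Finset.sum_range_succ, Finset.sum_range_zero]
  ring_nf

theorem stmt_6_general (m : ℕ) (q : ℕ) (hq : q = 2 ^ m)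
    (F E : Type*) [Field F] [Fintype F] [Field E] [Fintype E] [Algebra F E]
    (hF : Fintype.card F = q) (hE : Fintype.card E = q ^ 3)
    (Tr : E → E) (hTr : ∀ X, Tr X = X + X ^ q + X ^ q ^ 2)
    (α : E) (hαtr : Tr α = 0) :
    ∀ x y z : F,
      (algebraMap F E x + algebraMap F E y * α + algebraMap F E z * α ^ q) ^ (q ^ 2 + q + 1) =
          (algebraMap F E x) ^ 3 +
            algebraMap F E x * (algebraMap F E (y ^ 2 + z ^ 2 + y * z) * Tr (α ^ (q + 1))) +
            Tr ((algebraMap F E y * α + algebraMap F E z * α ^ q) ^ 3) ∧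
        (algebraMap F E x + algebraMap F E y * α + algebraMap F E z * α ^ q) ^ (q ^ 2 + q + 1) ∈
          Set.range (algebraMap F E) := by
  have : CharP E 2 := charP_of_card_eq_prime_pow (f := m * 3) (by rw [hE, hq, pow_mul])
  set σ := iterateFrobenius E 2 m
  have hσ (X : E) : σ X = X ^ q := by rw [iterateFrobenius_def, hq]
  have hTrσ (X : E) : Tr X = cyclicTrace σ X := by
    rw [hTr, cyclicTrace, hσ, hσ, ← pow_mul, sq]
  have hfix (a : F) : σ (algebraMap F E a) = algebraMap F E a := by
    rw [hσ, ← map_pow, ← hF, FiniteField.pow_card]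
  have hnorm (X : E) : X ^ (q ^ 2 + q + 1) = X * σ X * σ (σ X) := by
    rw [hσ, hσ, ← pow_mul, ← sq]
    ring
  intro x y z
  refine ⟨?_, ⟨_, FiniteField.algebraMap_norm_eq_pow_of_card_eq_pow_three hF hE _⟩⟩
  simp only [map_add, map_mul, map_pow]
  rw [hnorm, pow_succ' α q, ← hσ α, hTrσ, hTrσ]
  exact mul_map_mul_map_map_eq_of_cyclicTrace_eq_zero σ (hTrσ α ▸ hαtr) (hfix x) (hfix y)
    (hfix z)

theorem stmt_6 (m : ℕ) (hm : 0 < m) (q : ℕ) (hq : q = 2 ^ m)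
    (F E : Type*) [Field F] [Fintype F] [Field E] [Fintype E] [Algebra F E]
    (hF : Fintype.card F = q) (hE : Fintype.card E = q ^ 3)
    (Tr : E → E) (hTr : ∀ X, Tr X = X + X ^ q + X ^ q ^ 2)
    (α : E) (hα0 : α ≠ 0) (hαtr : Tr α = 0)
    (hb : ∃ b : Module.Basis (Fin 3) F E, b 0 = 1 ∧ b 1 = α ∧ b 2 = α ^ q) :
    ∀ x y z : F,
      (algebraMap F E x + algebraMap F E y * α + algebraMap F E z * α ^ q) ^ (q ^ 2 + q + 1) =
          (algebraMap F E x) ^ 3 +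
            algebraMap F E x * (algebraMap F E (y ^ 2 + z ^ 2 + y * z) * Tr (α ^ (q + 1))) +
            Tr ((algebraMap F E y * α + algebraMap F E z * α ^ q) ^ 3) ∧
        (algebraMap F E x + algebraMap F E y * α + algebraMap F E z * α ^ q) ^ (q ^ 2 + q + 1) ∈
          Set.range (algebraMap F E) :=
  stmt_6_general m q hq F E hF hE Tr hTr α hαtr
end

section
/- Let q = 2^m and let a, c₁, c₂, c₃, c₄, γ ∈ F_q with a² + a + 1 ≠ 0. The map f(X) = X + aX^q + γ·Tr_{F_{q^3}/F_q}(c₁X + c₂X² + c₃X³ + c₄X^{q+2}) is a permutation of F_{q^3} if and only if one of the following holds: (i) γ(c₃ + c₄) = 0, γc₂ = 0 and a + 1 + γc₁ ≠ 0; (ii) γ(c₃ + c₄) = 0, γc₂ ≠ 0 and a + 1 + γc₁ = 0; (iii) γ(c₃ + c₄) ≠ 0, γ(c₁c₃ + c₁c₄ + c₂²) = (a+1)(c₃ + c₄), and m is odd. -/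
/-!
In characteristic 2, for `u ∈ F` one has `f (X + u) = f X + u * Q(u, Tr X)` with
`Q(u, w) = (a + 1 + γc₁) + γc₂u + γ(c₃ + c₄)(w² + uw + u²)`. Conversely, if `f X = f Y` then
`U = Y - X` satisfies `U + aU^q ∈ F`, and conjugating this twice gives
`(a² + a + 1)(U^q - U) = 0`, so `U ∈ F`. As `Tr` maps onto `F`, `f` is a permutation iff `Q` has
no zero with `u ≠ 0`. When `γ(c₃ + c₄) ≠ 0`, rescaling turns this into a question about the norm
form `x² + xr + r²` of `𝔽₄/𝔽₂`: it represents every `c ≠ 0`, and represents `0` with `r ≠ 0` iff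
`F` contains a primitive cube root of unity, i.e. iff `3 ∣ 2^m - 1`, i.e. iff `m` is even.
-/

open Polynomial

theorem Nat.three_dvd_two_pow_sub_one_iff (m : ℕ) : 3 ∣ 2 ^ m - 1 ↔ Even m := by
  rw [← ZMod.natCast_eq_zero_iff, Nat.cast_sub Nat.one_le_two_pow, sub_eq_zero, Nat.cast_pow,
    show ((2 : ℕ) : ZMod 3) = -1 by decide, Nat.cast_one]
  exact neg_one_pow_eq_one_iff_even (by decide)

namespace FiniteField

variable {K : Type*} [Field K]

theorem exists_isPrimitiveRoot_iff_dvd_card_sub_one [Fintype K] (p : ℕ) [Fact p.Prime] :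
    (∃ ζ : K, IsPrimitiveRoot ζ p) ↔ p ∣ Fintype.card K - 1 := by
  classical
  rw [← Fintype.card_units]
  constructor
  · rintro ⟨ζ, hζ⟩
    rw [(hζ.isUnit_unit (Fact.out : p.Prime).ne_zero).eq_orderOf]
    exact orderOf_dvd_card
  · intro h
    obtain ⟨ζ, hζ⟩ := exists_prime_orderOf_dvd_card p h
    exact ⟨ζ, IsPrimitiveRoot.coe_units_iff.mpr (hζ ▸ IsPrimitiveRoot.orderOf ζ)⟩

theorem sq_add_self_add_one_eq_zero_iff_isPrimitiveRoot [NeZero (3 : K)] {x : K} :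
    x ^ 2 + x + 1 = 0 ↔ IsPrimitiveRoot x 3 := by
  have : NeZero ((3 : ℕ) : K) := by exact_mod_cast ‹NeZero (3 : K)›
  rw [← isRoot_cyclotomic_iff, cyclotomic_three]
  simp

theorem exists_sq_add_self_add_one_eq_zero_iff_even [Fintype K] {m : ℕ}
    (hK : Fintype.card K = 2 ^ m) : (∃ x : K, x ^ 2 + x + 1 = 0) ↔ Even m := by
  have : Fact (Nat.Prime 3) := ⟨Nat.prime_three⟩
  have : CharP K 2 := charP_of_card_eq_prime_pow hK
  have : NeZero (3 : K) := ⟨by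
    rw [show (3 : K) = 2 + 1 by norm_num, CharTwo.two_eq_zero, zero_add]; exact one_ne_zero⟩
  simp_rw [sq_add_self_add_one_eq_zero_iff_isPrimitiveRoot,
    exists_isPrimitiveRoot_iff_dvd_card_sub_one, hK, Nat.three_dvd_two_pow_sub_one_iff]

theorem exists_sq_add_mul_add_sq_eq_zero_iff :
    (∃ x r : K, r ≠ 0 ∧ x ^ 2 + x * r + r ^ 2 = 0) ↔ ∃ t : K, t ^ 2 + t + 1 = 0 := by
  constructor
  · rintro ⟨x, r, hr, h⟩
    refine ⟨x / r, ?_⟩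
    field_simp
    linear_combination h
  · rintro ⟨t, ht⟩
    exact ⟨t, 1, one_ne_zero, by linear_combination ht⟩

theorem exists_sq_add_mul_add_sq_eq_of_ne_zero [Finite K] [CharP K 2] {c : K} (hc : c ≠ 0) :
    ∃ x r : K, r ≠ 0 ∧ x ^ 2 + x * r + r ^ 2 = c := by
  obtain ⟨s, rfl⟩ := isSquare_of_charTwo' c
  refine ⟨s, s, left_ne_zero_of_mul hc, ?_⟩
  linear_combination s ^ 2 * CharTwo.two_eq_zero (R := K)

theorem forall_ne_zero_add_mul_ne_zero_iff [CharP K 2] (A B : K) :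
    (∀ u : K, u ≠ 0 → A + B * u ≠ 0) ↔ (B = 0 ∧ A ≠ 0) ∨ (B ≠ 0 ∧ A = 0) := by
  by_cases hB : B = 0
  · simp only [hB, zero_mul, add_zero, true_and, ne_eq, not_true_eq_false, false_and, or_false]
    exact ⟨fun h => h 1 one_ne_zero, fun h _ _ => h⟩
  · simp only [hB, false_and, ne_eq, not_false_eq_true, true_and, false_or]
    refine ⟨fun h => by_contra fun hA => h (A / B) (div_ne_zero hA hB) ?_, fun hA u hu => ?_⟩
    · rw [mul_div_cancel₀ A hB, CharTwo.add_self_eq_zero]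
    · rw [hA, zero_add]
      exact mul_ne_zero hB hu

theorem forall_ne_zero_add_mul_add_mul_ne_zero_iff_of_ne_zero [Finite K] [CharP K 2]
    (A B : K) {D : K} (hD : D ≠ 0) :
    (∀ u w : K, u ≠ 0 → A + B * u + D * (w ^ 2 + u * w + u ^ 2) ≠ 0) ↔
      A * D = B ^ 2 ∧ ¬∃ t : K, t ^ 2 + t + 1 = 0 := by
  have key : ∀ u w : K, D * (A + B * u + D * (w ^ 2 + u * w + u ^ 2)) =
      (D * w + B) ^ 2 + (D * w + B) * (D * u) + (D * u) ^ 2 - (B ^ 2 - A * D) := fun u w => by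
    linear_combination (-D * w * B) * CharTwo.two_eq_zero (R := K)
  have hnorm : (∀ u w : K, u ≠ 0 → A + B * u + D * (w ^ 2 + u * w + u ^ 2) ≠ 0) ↔
      ¬∃ x r : K, r ≠ 0 ∧ x ^ 2 + x * r + r ^ 2 = B ^ 2 - A * D := by
    constructor
    · rintro h ⟨x, r, hr, hxr⟩
      refine h (r / D) ((x - B) / D) (div_ne_zero hr hD) (mul_left_cancel₀ hD ?_)
      rw [key, mul_div_cancel₀ _ hD, mul_div_cancel₀ _ hD, sub_add_cancel, hxr, sub_self,
        mul_zero]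
    · rintro h u w hu hQ
      exact h ⟨D * w + B, D * u, mul_ne_zero hD hu, by linear_combination D * hQ - key u w⟩
  rw [hnorm]
  by_cases hc : B ^ 2 - A * D = 0
  · rw [hc, exists_sq_add_mul_add_sq_eq_zero_iff, eq_comm, ← sub_eq_zero]
    simp [hc]
  · exact iff_of_false (not_not.mpr (exists_sq_add_mul_add_sq_eq_of_ne_zero hc))
      fun h => hc (by rw [h.1, sub_self])

theorem forall_ne_zero_add_mul_add_mul_ne_zero_iff [Finite K] [CharP K 2] (A B D : K) :
    (∀ u w : K, u ≠ 0 → A + B * u + D * (w ^ 2 + u * w + u ^ 2) ≠ 0) ↔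
      (D = 0 ∧ B = 0 ∧ A ≠ 0) ∨ (D = 0 ∧ B ≠ 0 ∧ A = 0) ∨
        (D ≠ 0 ∧ A * D = B ^ 2 ∧ ¬∃ t : K, t ^ 2 + t + 1 = 0) := by
  by_cases hD : D = 0
  · simp only [hD, zero_mul, add_zero, true_and, ne_eq, not_true_eq_false, false_and, or_false]
    exact ⟨fun h => (forall_ne_zero_add_mul_ne_zero_iff A B).mp fun u hu => h u 0 hu,
      fun h u _ hu => (forall_ne_zero_add_mul_ne_zero_iff A B).mpr h u hu⟩
  · simp only [hD, false_and, ne_eq, not_false_eq_true, true_and, false_or]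
    exact forall_ne_zero_add_mul_add_mul_ne_zero_iff_of_ne_zero A B hD

section Extension

variable {F E : Type*} [Field F] [Fintype F] [Field E] [Algebra F E]

theorem mem_range_algebraMap_iff_pow_card_eq_self [Finite E] (x : E) :
    x ∈ Set.range (algebraMap F E) ↔ x ^ Fintype.card F = x := by
  refine ⟨?_, fun hx => (IsGalois.mem_range_algebraMap_iff_fixed x).mpr fun g => ?_⟩
  · rintro ⟨b, rfl⟩
    rw [← map_pow, pow_card]
  · obtain ⟨n, rfl⟩ := (bijective_frobeniusAlgEquivOfAlgebraic_pow F E).2 g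
    rw [AlgEquiv.coe_pow]
    exact Function.iterate_fixed hx n

theorem finrank_eq_of_card_eq_pow [Fintype E] {n : ℕ}
    (h : Fintype.card E = Fintype.card F ^ n) : Module.finrank F E = n :=
  Nat.pow_right_injective Fintype.one_lt_card (Module.card_eq_pow_finrank.symm.trans h)

theorem algebraMap_trace_eq_of_finrank_eq_three [Finite E] (h : Module.finrank F E = 3)
    (x : E) :
    algebraMap F E (Algebra.trace F E x) = x + x ^ Fintype.card F + x ^ Fintype.card F ^ 2 := by
  rw [algebraMap_trace_eq_sum_pow, h, Nat.card_eq_fintype_card]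
  simp [Finset.sum_range_succ]

end Extension

end FiniteField

namespace Algebra

theorem trace_algebraMap_mul {F E : Type*} [CommRing F] [CommRing E] [Algebra F E] (b : F)
    (x : E) :
    trace F E (algebraMap F E b * x) = b * trace F E x := by
  rw [← smul_def, map_smul, smul_eq_mul]

variable {F E : Type*} [Field F] [Field E] [Finite E] [Algebra F E]

theorem trace_pow_char (p : ℕ) [Fact p.Prime] [CharP F p] (x : E) :
    trace F E (x ^ p) = trace F E x ^ p := by
  have : CharP E p := charP_of_injective_algebraMap' F p
  apply (algebraMap F E).injective
  rw [map_pow (algebraMap F E), FiniteField.algebraMap_trace_eq_sum_pow,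
    FiniteField.algebraMap_trace_eq_sum_pow, sum_pow_char]
  simp_rw [pow_right_comm x p]

theorem trace_pow_card [Fintype F] (x : E) : trace F E (x ^ Fintype.card F) = trace F E x :=
  trace_eq_of_algEquiv (FiniteField.frobeniusAlgEquivOfAlgebraic F E) x

end Algebra

theorem RingHom.apply_eq_self_of_add_mul_apply_eq {R : Type*} [CommRing R] [IsDomain R]
    (φ : R →+* R) (hφ : ∀ x, φ (φ (φ x)) = x) {a c U : R} (ha : φ a = a) (hc : φ c = c)
    (ha' : a ^ 2 - a + 1 ≠ 0) (h : U + a * φ U = c) : φ U = U := by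
  have h₁ : φ U + a * φ (φ U) = c := by simpa [ha, hc] using congrArg φ h
  have h₂ : φ (φ U) + a * U = c := by simpa [ha, hc, hφ] using congrArg φ h₁
  have : (a ^ 2 - a + 1) * (φ U - U) = 0 := by
    linear_combination (a - 1) * (h - h₁) + a * (h₁ - h₂)
  exact sub_eq_zero.mp ((mul_eq_zero.mp this).resolve_left ha')

section LinearizedTraceMap

open Algebra (trace)

variable {F E : Type*} [Field F] [Fintype F] [Field E] [Fintype E] [Algebra F E]

theorem injective_iff_of_map_add_algebraMap {f : E → E} {Q : F → F → F}
    (hf : ∀ X (u : F), f (X + algebraMap F E u) = f X + algebraMap F E (u * Q u (trace F E X)))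
    (hrange : ∀ X Y, f X = f Y → Y - X ∈ Set.range (algebraMap F E)) :
    Function.Injective f ↔ ∀ u w, u ≠ 0 → Q u w ≠ 0 := by
  constructor
  · intro hinj u w hu hQ
    obtain ⟨X, rfl⟩ := Algebra.trace_surjective F E w
    have : f (X + algebraMap F E u) = f X := by rw [hf, hQ, mul_zero, map_zero, add_zero]
    simpa [hu] using hinj this
  · intro hQ X Y hXY
    obtain ⟨u, hu⟩ := hrange X Y hXY
    rw [eq_sub_iff_add_eq'] at hu
    rw [← hu, hf, left_eq_add, map_eq_zero_iff _ (algebraMap F E).injective] at hXY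
    obtain rfl | hu0 := eq_or_ne u 0
    · simpa using hu
    · exact absurd ((mul_eq_zero.mp hXY).resolve_left hu0) (hQ u _ hu0)

variable (a γ c₁ c₂ c₃ c₄ : F)

noncomputable def tracedPoly (X : E) : E :=
  algebraMap F E c₁ * X + algebraMap F E c₂ * X ^ 2 + algebraMap F E c₃ * X ^ 3 +
    algebraMap F E c₄ * X ^ (Fintype.card F + 2)

noncomputable def linearizedTraceMap (X : E) : E :=
  X + algebraMap F E a * X ^ Fintype.card F +
    algebraMap F E γ * algebraMap F E (trace F E (tracedPoly c₁ c₂ c₃ c₄ X))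

variable [CharP F 2] {a γ c₁ c₂ c₃ c₄}

theorem tracedPoly_add_algebraMap (X : E) (u : F) :
    tracedPoly c₁ c₂ c₃ c₄ (X + algebraMap F E u) = tracedPoly c₁ c₂ c₃ c₄ X +
      algebraMap F E (c₁ * u + c₂ * u ^ 2 + (c₃ + c₄) * u ^ 3) +
      algebraMap F E ((c₃ + c₄) * u) * X ^ 2 + algebraMap F E (c₃ * u ^ 2) * X +
      algebraMap F E (c₄ * u ^ 2) * X ^ Fintype.card F := by
  have : CharP E 2 := charP_of_injective_algebraMap' F 2
  have hfrob := map_add (FiniteField.frobeniusAlgHom F E) X (algebraMap F E u)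
  rw [AlgHom.commutes] at hfrob
  have hsq : (X + algebraMap F E u) ^ 2 = X ^ 2 + algebraMap F E u ^ 2 := CharTwo.add_sq _ _
  rw [tracedPoly, tracedPoly, pow_add, pow_succ (X + algebraMap F E u) 2, hsq,
    show (X + algebraMap F E u) ^ Fintype.card F = _ from hfrob]
  simp only [map_add, map_mul, map_pow, FiniteField.frobeniusAlgHom_apply]
  ring

theorem trace_tracedPoly_add_algebraMap (h : Module.finrank F E = 3) (X : E) (u : F) :
    trace F E (tracedPoly c₁ c₂ c₃ c₄ (X + algebraMap F E u)) =
      trace F E (tracedPoly c₁ c₂ c₃ c₄ X) +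
        u * (c₁ + c₂ * u + (c₃ + c₄) * (trace F E X ^ 2 + u * trace F E X + u ^ 2)) := by
  rw [tracedPoly_add_algebraMap]
  simp only [map_add, Algebra.trace_algebraMap, Algebra.trace_algebraMap_mul,
    Algebra.trace_pow_char 2, Algebra.trace_pow_card, h, nsmul_eq_mul, Nat.cast_ofNat]
  linear_combination (c₁ * u + c₂ * u ^ 2 + (c₃ + c₄) * u ^ 3) * CharTwo.two_eq_zero (R := F)

theorem linearizedTraceMap_add_algebraMap (h : Module.finrank F E = 3) (X : E) (u : F) :
    linearizedTraceMap a γ c₁ c₂ c₃ c₄ (X + algebraMap F E u) =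
      linearizedTraceMap a γ c₁ c₂ c₃ c₄ X + algebraMap F E (u * (a + 1 + γ * c₁ + γ * c₂ * u +
        γ * (c₃ + c₄) * (trace F E X ^ 2 + u * trace F E X + u ^ 2))) := by
  have hfrob := map_add (FiniteField.frobeniusAlgHom F E) X (algebraMap F E u)
  rw [AlgHom.commutes] at hfrob
  rw [linearizedTraceMap, linearizedTraceMap, trace_tracedPoly_add_algebraMap h,
    show (X + algebraMap F E u) ^ Fintype.card F = _ from hfrob]
  simp only [map_add, map_mul, map_pow, map_one, FiniteField.frobeniusAlgHom_apply]
  ring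

theorem linearizedTraceMap_sub_mem_range (h : Module.finrank F E = 3) (ha : a ^ 2 + a + 1 ≠ 0)
    {X Y : E}
    (hXY : linearizedTraceMap a γ c₁ c₂ c₃ c₄ X = linearizedTraceMap a γ c₁ c₂ c₃ c₄ Y) :
    Y - X ∈ Set.range (algebraMap F E) := by
  have : CharP E 2 := charP_of_injective_algebraMap' F 2
  let φ := (FiniteField.frobeniusAlgHom F E).toRingHom
  have hφ_apply : ∀ x, φ x = x ^ Fintype.card F := fun _ => rfl
  have hφ : ∀ x, φ (φ (φ x)) = x := fun x => by
    rw [hφ_apply, hφ_apply, hφ_apply, ← pow_mul, ← pow_mul, ← pow_three, ← h,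
      ← Module.card_eq_pow_finrank, FiniteField.pow_card]
  have ha' : algebraMap F E a ^ 2 - algebraMap F E a + 1 ≠ 0 := by
    simpa [CharTwo.sub_eq_add] using (map_ne_zero (algebraMap F E)).mpr ha
  have hU : Y - X + algebraMap F E a * φ (Y - X) = algebraMap F E (γ *
      (trace F E (tracedPoly c₁ c₂ c₃ c₄ X) - trace F E (tracedPoly c₁ c₂ c₃ c₄ Y))) := by
    rw [map_sub φ, hφ_apply, hφ_apply, map_mul, map_sub]
    rw [linearizedTraceMap, linearizedTraceMap] at hXY
    linear_combination -hXY
  rw [FiniteField.mem_range_algebraMap_iff_pow_card_eq_self]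
  exact RingHom.apply_eq_self_of_add_mul_apply_eq φ hφ (AlgHom.commutes _ a) (AlgHom.commutes _ _)
    ha' hU

end LinearizedTraceMap

theorem stmt_9_general (m : ℕ) (q : ℕ) (hq : q = 2 ^ m)
    (F E : Type*) [Field F] [Fintype F] [Field E] [Fintype E] [Algebra F E]
    (hF : Fintype.card F = q) (hE : Fintype.card E = q ^ 3)
    (Tr : E → E) (hTr : ∀ X, Tr X = X + X ^ q + X ^ q ^ 2)
    (a c₁ c₂ c₃ c₄ γ : F) (ha : a ^ 2 + a + 1 ≠ 0) :
    Function.Bijective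
        (fun X : E => X + algebraMap F E a * X ^ q +
          algebraMap F E γ *
            Tr (algebraMap F E c₁ * X + algebraMap F E c₂ * X ^ 2 +
              algebraMap F E c₃ * X ^ 3 + algebraMap F E c₄ * X ^ (q + 2))) ↔
      (γ * (c₃ + c₄) = 0 ∧ γ * c₂ = 0 ∧ a + 1 + γ * c₁ ≠ 0) ∨
      (γ * (c₃ + c₄) = 0 ∧ γ * c₂ ≠ 0 ∧ a + 1 + γ * c₁ = 0) ∨
      (γ * (c₃ + c₄) ≠ 0 ∧ γ * (c₁ * c₃ + c₁ * c₄ + c₂ ^ 2) = (a + 1) * (c₃ + c₄) ∧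
        Odd m) := by
  subst hF
  have : CharP F 2 := charP_of_card_eq_prime_pow hq
  have hrank := FiniteField.finrank_eq_of_card_eq_pow hE
  obtain rfl : Tr = fun X => algebraMap F E (Algebra.trace F E X) := funext fun X =>
    (hTr X).trans (FiniteField.algebraMap_trace_eq_of_finrank_eq_three hrank X).symm
  rw [← Finite.injective_iff_bijective]
  change Function.Injective (linearizedTraceMap a γ c₁ c₂ c₃ c₄) ↔ _
  rw [injective_iff_of_map_add_algebraMap (Q := fun u w =>
      a + 1 + γ * c₁ + γ * c₂ * u + γ * (c₃ + c₄) * (w ^ 2 + u * w + u ^ 2))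
      (linearizedTraceMap_add_algebraMap hrank)
      fun _ _ => linearizedTraceMap_sub_mem_range hrank ha,
    FiniteField.forall_ne_zero_add_mul_add_mul_ne_zero_iff,
    FiniteField.exists_sq_add_self_add_one_eq_zero_iff_even hq, Nat.not_even_iff_odd]
  refine or_congr_right (or_congr_right (and_congr_right fun hD => and_congr_left' ?_))
  have h2 : (2 : F) = 0 := CharTwo.two_eq_zero
  constructor <;> intro h
  · refine mul_left_cancel₀ (left_ne_zero_of_mul hD) ?_
    linear_combination h + (γ ^ 2 * c₂ ^ 2 - γ * (a + 1) * (c₃ + c₄)) * h2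
  · linear_combination γ * h - (γ ^ 2 * c₂ ^ 2 - γ * (a + 1) * (c₃ + c₄)) * h2

theorem stmt_9 (m : ℕ) (hm : 0 < m) (q : ℕ) (hq : q = 2 ^ m)
    (F E : Type*) [Field F] [Fintype F] [Field E] [Fintype E] [Algebra F E]
    (hF : Fintype.card F = q) (hE : Fintype.card E = q ^ 3)
    (Tr : E → E) (hTr : ∀ X, Tr X = X + X ^ q + X ^ q ^ 2)
    (a c₁ c₂ c₃ c₄ γ : F) (ha : a ^ 2 + a + 1 ≠ 0) :
    Function.Bijective
        (fun X : E => X + algebraMap F E a * X ^ q +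
          algebraMap F E γ *
            Tr (algebraMap F E c₁ * X + algebraMap F E c₂ * X ^ 2 +
              algebraMap F E c₃ * X ^ 3 + algebraMap F E c₄ * X ^ (q + 2))) ↔
      (γ * (c₃ + c₄) = 0 ∧ γ * c₂ = 0 ∧ a + 1 + γ * c₁ ≠ 0) ∨
      (γ * (c₃ + c₄) = 0 ∧ γ * c₂ ≠ 0 ∧ a + 1 + γ * c₁ = 0) ∨
      (γ * (c₃ + c₄) ≠ 0 ∧ γ * (c₁ * c₃ + c₁ * c₄ + c₂ ^ 2) = (a + 1) * (c₃ + c₄) ∧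
        Odd m) :=
  stmt_9_general m q hq F E hF hE Tr hTr a c₁ c₂ c₃ c₄ γ ha
end
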